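/- arXiv:1606.02577 — 4 statements merged into one kernel-verified Lean document; each statement's English description precedes it below -/
import Mathlib

section
/- Let f and g be two binary operations on a set D that are both conservative (f(x,y), g(x,y) ∈ {x,y}) and commutative, and satisfy f(x,y) ≠ g(x,y) whenever x ≠ y. Then the ternary operation h(x,y,z) = f(f(g(x,y), g(x,z)), g(y,z)) is a majority operation, i.e., h(x,x,y) = h(x,y,x) = h(y,x,x) = x for all x, y ∈ D. -/
/-! Conservativity makes `f` and `g` idempotent, and since `f` and `g` disagree off the
diagonal, `f` picks from `{x, g x y}` (in either order) the element `x`, the one `g` did not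
pick. Each of the three majority identities collapses to one of these absorption laws. -/

theorem conservative_apply_self {D : Type*} {p : D → D → D}
    (hcons : ∀ x y, p x y = x ∨ p x y = y) (x : D) : p x x = x :=
  (hcons x x).elim id id

section Absorption

variable {D : Type*} {f g : D → D → D}

theorem f_eq_left_of_g_eq_right (hfcons : ∀ x y, f x y = x ∨ f x y = y)
    (hne : ∀ x y, x ≠ y → f x y ≠ g x y) {x y : D} (hgy : g x y = y) : f x y = x := by
  by_cases hxy : x = y
  · rw [hxy, conservative_apply_self hfcons]
  · exact (hfcons x y).resolve_right fun hfy => hne x y hxy (hfy.trans hgy.symm)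

theorem f_eq_right_of_g_eq_left (hfcons : ∀ x y, f x y = x ∨ f x y = y)
    (hne : ∀ x y, x ≠ y → f x y ≠ g x y) {x y : D} (hgx : g x y = x) : f x y = y := by
  by_cases hxy : x = y
  · rw [hxy, conservative_apply_self hfcons]
  · exact (hfcons x y).resolve_left fun hfx => hne x y hxy (hfx.trans hgx.symm)

theorem f_absorbs_g_left (hfcons : ∀ x y, f x y = x ∨ f x y = y)
    (hgcons : ∀ x y, g x y = x ∨ g x y = y) (hne : ∀ x y, x ≠ y → f x y ≠ g x y)
    (x y : D) : f x (g x y) = x := by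
  rcases hgcons x y with hgx | hgy
  · rw [hgx, conservative_apply_self hfcons]
  · rw [hgy, f_eq_left_of_g_eq_right hfcons hne hgy]

theorem f_absorbs_g_right (hfcons : ∀ x y, f x y = x ∨ f x y = y)
    (hgcons : ∀ x y, g x y = x ∨ g x y = y) (hne : ∀ x y, x ≠ y → f x y ≠ g x y)
    (x y : D) : f (g y x) x = x := by
  rcases hgcons y x with hgy | hgx
  · rw [hgy, f_eq_right_of_g_eq_left hfcons hne hgy]
  · rw [hgx, conservative_apply_self hfcons]

end Absorption

theorem stp_gives_majority_general {D : Type*} (f g : D → D → D)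
    (hfcons : ∀ x y, f x y = x ∨ f x y = y)
    (hgcons : ∀ x y, g x y = x ∨ g x y = y)
    (hgcomm : ∀ x y, g x y = g y x)
    (hne : ∀ x y, x ≠ y → f x y ≠ g x y)
    (h : D → D → D → D)
    (hh : ∀ x y z, h x y z = f (f (g x y) (g x z)) (g y z)) :
    ∀ x y, h x x y = x ∧ h x y x = x ∧ h y x x = x := by
  intro x y
  have hff := conservative_apply_self hfcons
  have hgg := conservative_apply_self hgcons
  have hleft := f_absorbs_g_left hfcons hgcons hne
  have hright := f_absorbs_g_right hfcons hgcons hne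
  refine ⟨?_, ?_, ?_⟩
  · rw [hh, hgg, hleft, hleft]
  · rw [hh, hgg, hgcomm x y, hright, ← hgcomm x y, hleft]
  · rw [hh, hff, hgg, hright]

theorem stp_gives_majority {D : Type*} (f g : D → D → D)
    (hfcons : ∀ x y, f x y = x ∨ f x y = y)
    (hgcons : ∀ x y, g x y = x ∨ g x y = y)
    (hfcomm : ∀ x y, f x y = f y x)
    (hgcomm : ∀ x y, g x y = g y x)
    (hne : ∀ x y, x ≠ y → f x y ≠ g x y)
    (h : D → D → D → D)
    (hh : ∀ x y z, h x y z = f (f (g x y) (g x z)) (g y z)) :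
    ∀ x y, h x x y = x ∧ h x y x = x ∧ h y x x = x :=
  stp_gives_majority_general f g hfcons hgcons hgcomm hne h hh
end

section
/- Let D, P ⊆ {2-element subsets of D}, and suppose f, g : D² → D satisfy the multiset identity {f(x,y), g(x,y)} = {x,y} for all x,y, and that for every {a,b} ∈ P the restrictions f|_{a,b}, g|_{a,b} are commutative with f(x,y) ≠ g(x,y) when x ≠ y, while for every 2-element subset {a,b} ∉ P the operation p(x,y,z) := f(f(g(y,x),g(x,z)),g(y,z)) restricted to {a,b} is a projection (the first or second ternary projection). Then for all {a,b} ∈ P and x,y ∈ {a,b}: p(x,x,y) = p(x,y,x) = p(y,x,x) = x. -/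
section Conservative

variable {D : Type*} {f g : D → D → D}

theorem apply_self_eq_self
    (hms : ∀ x y, (f x y = x ∧ g x y = y) ∨ (f x y = y ∧ g x y = x)) (z : D) :
    f z z = z ∧ g z z = z := by
  rcases hms z z with h | h <;> exact h

/-- Commutativity makes `f` pick the same element of `{x, y}` in either order and `g` the other,
i.e. `f` and `g` are the two semilattice operations of the chain `{x, y}`. -/
theorem majority_of_comm
    (hms : ∀ x y, (f x y = x ∧ g x y = y) ∨ (f x y = y ∧ g x y = x)) {x y : D}
    (hf : f x y = f y x) (hg : g x y = g y x) :
    f (f (g x x) (g x y)) (g x y) = x ∧ f (f (g y x) (g x x)) (g y x) = x ∧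
      f (f (g x y) (g y x)) (g x x) = x := by
  obtain ⟨hfx, hgx⟩ := apply_self_eq_self hms x
  obtain ⟨hfy, -⟩ := apply_self_eq_self hms y
  rcases hms x y with ⟨h1, h2⟩ | ⟨h1, h2⟩ <;>
    simp only [← hf, ← hg, hfx, hgx, hfy, h1, h2, and_self]

end Conservative

theorem stp_part_gives_majority_on_P_general {D : Type*} [DecidableEq D]
    (P : Set (Finset D))
    (f g : D → D → D)
    (hms : ∀ x y, (f x y = x ∧ g x y = y) ∨ (f x y = y ∧ g x y = x))
    (p : D → D → D → D)
    (hp : ∀ x y z, p x y z = f (f (g y x) (g x z)) (g y z))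
    (hin : ∀ a b : D, ({a, b} : Finset D) ∈ P →
      ∀ x ∈ ({a, b} : Set D), ∀ y ∈ ({a, b} : Set D),
        f x y = f y x ∧ g x y = g y x ∧ (x ≠ y → f x y ≠ g x y)) :
    ∀ a b : D, ({a, b} : Finset D) ∈ P →
      ∀ x ∈ ({a, b} : Set D), ∀ y ∈ ({a, b} : Set D),
        p x x y = x ∧ p x y x = x ∧ p y x x = x := by
  intro a b hab x hx y hy
  obtain ⟨hf, hg, -⟩ := hin a b hab x hx y hy
  simpa only [hp] using majority_of_comm hms hf hg

theorem stp_part_gives_majority_on_P {D : Type*} [DecidableEq D]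
    (P : Set (Finset D)) (hP2 : ∀ s ∈ P, s.card = 2)
    (f g : D → D → D)
    (hms : ∀ x y, (f x y = x ∧ g x y = y) ∨ (f x y = y ∧ g x y = x))
    (p : D → D → D → D)
    (hp : ∀ x y z, p x y z = f (f (g y x) (g x z)) (g y z))
    (hin : ∀ a b : D, ({a, b} : Finset D) ∈ P →
      ∀ x ∈ ({a, b} : Set D), ∀ y ∈ ({a, b} : Set D),
        f x y = f y x ∧ g x y = g y x ∧ (x ≠ y → f x y ≠ g x y))
    (hout : ∀ a b : D, a ≠ b → ({a, b} : Finset D) ∉ P →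
      (∀ x ∈ ({a, b} : Set D), ∀ y ∈ ({a, b} : Set D), ∀ z ∈ ({a, b} : Set D),
          p x y z = x) ∨
      (∀ x ∈ ({a, b} : Set D), ∀ y ∈ ({a, b} : Set D), ∀ z ∈ ({a, b} : Set D),
          p x y z = y)) :
    ∀ a b : D, ({a, b} : Finset D) ∈ P →
      ∀ x ∈ ({a, b} : Set D), ∀ y ∈ ({a, b} : Set D),
        p x x y = x ∧ p x y x = x ∧ p y x x = x :=
  stp_part_gives_majority_on_P_general P f g hms p hp hin
end

section
/- Let I be a finite index set and for each i ∈ I let Φ_i : D^{r_i} → ℚ∪{∞} be a weighted relation and x_i a scope; let λ assign to each i a probability distribution λ_i over assignments σ : X_i → D supported on feasible assignments. Let ω be a probability distribution over m-ary operations f : D^m → D such that for each i, E_{f∼ω}[Φ_i(f(y_1,…,y_m))] ≤ (1/m)Σ_j Φ_i(y_j) for all feasible y_1,…,y_m. Define λ_i^ω(σ) = Pr_{f∼ω, σ_1,…,σ_m∼λ_i}[f∘(σ_1,…,σ_m) = σ]. Then for every i, Σ_σ λ_i^ω(σ)Φ_i(σ(x_i)) ≤ Σ_σ λ_i(σ)Φ_i(σ(x_i)).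 -/
/-!
Expanding `λ_i^ω`, the left-hand side is the expectation, over independent `σ_1, …, σ_m ∼ λ_i`,
of `E_{f∼ω} Φ_i(f∘(σ_1, …, σ_m)(x_i))`. Whenever the tuple has positive probability every `σ_j`
is feasible, so the fractional-polymorphism inequality bounds the inner expectation by the average
of the `Φ_i(σ_j(x_i))`; since each `σ_j` has marginal `λ_i`, the expectation of that average is
the right-hand side.
-/

open Finset

namespace WithTop

variable {α : Type*} [DecidableEq α]

lemma coe_mul_add [NonUnitalNonAssocSemiring α] (q : α) (x y : WithTop α) :
    (q : WithTop α) * (x + y) = q * x + q * y := by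
  rcases eq_or_ne q 0 with rfl | hq
  · simp
  have hq' : (q : WithTop α) ≠ 0 := by exact_mod_cast hq
  induction x with
  | top => simp [mul_top hq']
  | coe x =>
    induction y with
    | top => simp [mul_top hq']
    | coe y => norm_cast; rw [mul_add]

lemma coe_mul_sum [NonUnitalNonAssocSemiring α] {ι : Type*} (s : Finset ι) (q : α)
    (g : ι → WithTop α) : (q : WithTop α) * ∑ i ∈ s, g i = ∑ i ∈ s, (q : WithTop α) * g i := by
  induction s using Finset.cons_induction with
  | empty => simp
  | cons a s h ih => rw [sum_cons, sum_cons, coe_mul_add, ih]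

section OrderedSemiring

variable [Semiring α] [PartialOrder α] [IsOrderedRing α]

-- Nonnegativity is essential: `((-1 + 1 : α) : WithTop α) * ⊤ = 0`, while `-1 * ⊤ + 1 * ⊤ = ⊤`.
lemma coe_add_mul_of_nonneg {a b : α} (ha : 0 ≤ a) (hb : 0 ≤ b) (x : WithTop α) :
    ((a + b : α) : WithTop α) * x = a * x + b * x := by
  induction x with
  | coe x => norm_cast; rw [add_mul]
  | top =>
    rcases eq_or_ne a 0 with rfl | ha0
    · simp
    have hab : a + b ≠ 0 := fun h => ha0 ((add_eq_zero_iff_of_nonneg ha hb).1 h).1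
    rw [mul_top (by exact_mod_cast hab), mul_top (by exact_mod_cast ha0), top_add]

lemma coe_sum_mul_of_nonneg {ι : Type*} (s : Finset ι) {c : ι → α} (hc : ∀ i ∈ s, 0 ≤ c i)
    (x : WithTop α) : ((∑ i ∈ s, c i : α) : WithTop α) * x = ∑ i ∈ s, (c i : WithTop α) * x := by
  induction s using Finset.cons_induction with
  | empty => simp
  | cons a s h ih =>
    rw [forall_mem_cons] at hc
    rw [sum_cons, sum_cons, coe_add_mul_of_nonneg hc.1 (sum_nonneg hc.2), ih hc.2]

end OrderedSemiring

lemma coe_mul_le_coe_mul [MulZeroClass α] [Preorder α] [PosMulMono α] {q : α} (hq : 0 ≤ q)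
    {x y : WithTop α} (h : x ≤ y) : (q : WithTop α) * x ≤ q * y := by
  rcases eq_or_ne q 0 with rfl | hq0
  · simp
  induction y with
  | top => simp [mul_top (show (q : WithTop α) ≠ 0 by exact_mod_cast hq0)]
  | coe y =>
    induction x with
    | top => exact absurd h (not_top_le_coe y)
    | coe x => norm_cast at h ⊢; exact mul_le_mul_of_nonneg_left h hq

lemma one_div_mul_sum_const [DivisionSemiring α] [CharZero α] {m : ℕ} (hm : 0 < m)
    (x : WithTop α) : ((1 / m : α) : WithTop α) * ∑ _j : Fin m, x = x := by
  have hm' : (1 / m : α) ≠ 0 := one_div_ne_zero (Nat.cast_ne_zero.2 hm.ne')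
  induction x with
  | top =>
    rw [sum_eq_top.2 ⟨⟨0, hm⟩, mem_univ _, rfl⟩, mul_top (by exact_mod_cast hm')]
  | coe x =>
    norm_cast
    rw [sum_const, card_univ, Fintype.card_fin, nsmul_eq_mul, ← mul_assoc, one_div,
      inv_mul_cancel₀ (by exact_mod_cast hm.ne'), one_mul]

end WithTop

section Fiberwise

variable {𝕜 α β : Type*} [Semiring 𝕜] [PartialOrder 𝕜] [IsOrderedRing 𝕜] [DecidableEq 𝕜]
  [Fintype α] [Fintype β] [DecidableEq β]

lemma sum_fiberwise_coe_mul {w : α → 𝕜} (hw : ∀ a, 0 ≤ w a) (g : α → β) (φ : β → WithTop 𝕜) :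
    ∑ b, ((∑ a, if g a = b then w a else 0 : 𝕜) : WithTop 𝕜) * φ b =
      ∑ a, (w a : WithTop 𝕜) * φ (g a) := by
  have hite : ∀ a b, 0 ≤ if g a = b then w a else 0 := fun a b => by
    split_ifs
    exacts [hw a, le_rfl]
  calc ∑ b, ((∑ a, if g a = b then w a else 0 : 𝕜) : WithTop 𝕜) * φ b
      = ∑ b, ∑ a, if g a = b then (w a : WithTop 𝕜) * φ b else 0 := by
        refine sum_congr rfl fun b _ => ?_
        rw [WithTop.coe_sum_mul_of_nonneg _ fun a _ => hite a b]
        exact sum_congr rfl fun a _ => by split_ifs <;> simp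
    _ = ∑ a, (w a : WithTop 𝕜) * φ (g a) := by
        rw [sum_comm]
        exact sum_congr rfl fun a _ => by rw [sum_ite_eq]; simp

lemma sum_fiberwise₂_coe_mul {γ : Type*} [Fintype γ] {w : γ → α → 𝕜} (hw : ∀ c a, 0 ≤ w c a)
    (g : γ → α → β) (φ : β → WithTop 𝕜) :
    ∑ b, ((∑ c, ∑ a, if g c a = b then w c a else 0 : 𝕜) : WithTop 𝕜) * φ b =
      ∑ a, ∑ c, (w c a : WithTop 𝕜) * φ (g c a) := by
  conv_rhs => rw [← Fintype.sum_prod_type_right']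
  simp only [← Fintype.sum_prod_type']
  exact sum_fiberwise_coe_mul (fun p : γ × α => hw p.1 p.2) (fun p => g p.1 p.2) φ

end Fiberwise

section Marginal

variable {𝕜 β ι : Type*} [Fintype β] [DecidableEq β] [Fintype ι] [DecidableEq ι]

lemma sum_pi_ite_apply_eq_prod_of_sum_eq_one [CommSemiring 𝕜] {p : β → 𝕜} (hp : ∑ b, p b = 1)
    (j : ι) (b₀ : β) :
    ∑ σs : ι → β, (if σs j = b₀ then ∏ k, p (σs k) else 0) = p b₀ := by
  let q : ι → β → 𝕜 := fun k b => if k = j then (if b = b₀ then p b else 0) else p b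
  have hprod : ∀ σs : ι → β, ∏ k, q k (σs k) = if σs j = b₀ then ∏ k, p (σs k) else 0 := by
    intro σs
    split_ifs with h
    · exact prod_congr rfl fun k _ => by by_cases hk : k = j <;> simp [q, hk, h]
    · exact prod_eq_zero (mem_univ j) (by simp [q, h])
  have hsum : ∀ k, ∑ b, q k b = if k = j then p b₀ else 1 := by
    intro k
    by_cases hk : k = j <;> simp [q, hk, hp]
  simp_rw [← hprod, ← Fintype.prod_sum, hsum, prod_ite_eq', mem_univ, if_true]

lemma sum_pi_coe_prod_mul_apply [CommSemiring 𝕜] [PartialOrder 𝕜] [IsOrderedRing 𝕜]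
    [DecidableEq 𝕜] {p : β → 𝕜} (hp0 : ∀ b, 0 ≤ p b) (hp1 : ∑ b, p b = 1) (j : ι)
    (φ : β → WithTop 𝕜) :
    ∑ σs : ι → β, ((∏ k, p (σs k) : 𝕜) : WithTop 𝕜) * φ (σs j) = ∑ b, (p b : WithTop 𝕜) * φ b := by
  calc ∑ σs : ι → β, ((∏ k, p (σs k) : 𝕜) : WithTop 𝕜) * φ (σs j)
      = ∑ b, ((∑ σs : ι → β, if σs j = b then ∏ k, p (σs k) else 0 : 𝕜) : WithTop 𝕜) * φ b :=
        (sum_fiberwise_coe_mul (fun σs : ι → β => prod_nonneg fun k _ => hp0 (σs k)) (· j) φ).symm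
    _ = ∑ b, (p b : WithTop 𝕜) * φ b := by simp_rw [sum_pi_ite_apply_eq_prod_of_sum_eq_one hp1]

end Marginal

theorem averaging_by_fractional_polymorphism_does_not_increase_value_general
    {D : Type*} [Fintype D] [DecidableEq D]
    {I : Type*} [Fintype I] (X : I → Type*) [∀ i, Fintype (X i)] [∀ i, DecidableEq (X i)]
    (r : I → ℕ) (Φ : ∀ i, (Fin (r i) → D) → WithTop ℚ)
    (xsc : ∀ i, Fin (r i) → X i)
    (lam : ∀ i, (X i → D) → ℚ)
    (hlam0 : ∀ i σ, 0 ≤ lam i σ) (hlam1 : ∀ i, ∑ σ : X i → D, lam i σ = 1)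
    (hfeas : ∀ i (σ : X i → D), lam i σ ≠ 0 → Φ i (fun j => σ (xsc i j)) ≠ ⊤)
    {m : ℕ} (hm : 0 < m) (ω : ((Fin m → D) → D) → ℚ)
    (hω0 : ∀ f, 0 ≤ ω f)
    (himp : ∀ i (ys : Fin m → (Fin (r i) → D)), (∀ j, Φ i (ys j) ≠ ⊤) →
      ∑ f, (ω f : WithTop ℚ) * Φ i (fun l => f (fun j => ys j l)) ≤
        ((1 / m : ℚ) : WithTop ℚ) * ∑ j, Φ i (ys j))
    (lamω : ∀ i, (X i → D) → ℚ)
    (hlamω : ∀ i (σ : X i → D), lamω i σ =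
      ∑ f, ∑ σs : Fin m → (X i → D),
        if (fun x => f (fun j => σs j x)) = σ then ω f * ∏ j, lam i (σs j) else 0) :
    ∀ i, ∑ σ : X i → D, (lamω i σ : WithTop ℚ) * Φ i (fun j => σ (xsc i j)) ≤
      ∑ σ : X i → D, (lam i σ : WithTop ℚ) * Φ i (fun j => σ (xsc i j)) := by
  intro i
  set value : (X i → D) → WithTop ℚ := fun σ => Φ i (fun l => σ (xsc i l))
  set P : (Fin m → X i → D) → ℚ := fun σs => ∏ j, lam i (σs j)
  have hP : ∀ σs, 0 ≤ P σs := fun σs => prod_nonneg fun j _ => hlam0 i (σs j)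
  have hstep : ∀ σs, ∑ f, ((ω f * P σs : ℚ) : WithTop ℚ) * value (fun x => f fun j => σs j x) ≤
      P σs * (((1 / m : ℚ) : WithTop ℚ) * ∑ j, value (σs j)) := by
    intro σs
    rcases eq_or_ne (P σs) 0 with hzero | hsupp
    · simp [hzero]
    · simp_rw [WithTop.coe_mul, mul_comm (ω _ : WithTop ℚ), mul_assoc, ← WithTop.coe_mul_sum]
      exact WithTop.coe_mul_le_coe_mul (hP σs)
        (himp i _ fun j => hfeas i _ (prod_ne_zero_iff.1 hsupp j (mem_univ j)))
  calc ∑ σ, (lamω i σ : WithTop ℚ) * value σ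
      = ∑ σs, ∑ f, ((ω f * P σs : ℚ) : WithTop ℚ) * value (fun x => f fun j => σs j x) := by
        simp_rw [hlamω]
        exact sum_fiberwise₂_coe_mul (fun f σs => mul_nonneg (hω0 f) (hP σs)) _ value
    _ ≤ ∑ σs, P σs * (((1 / m : ℚ) : WithTop ℚ) * ∑ j, value (σs j)) :=
        sum_le_sum fun σs _ => hstep σs
    _ = ((1 / m : ℚ) : WithTop ℚ) * ∑ j : Fin m, ∑ σs, (P σs : WithTop ℚ) * value (σs j) := by
        simp_rw [mul_left_comm (P _ : WithTop ℚ), WithTop.coe_mul_sum]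
        rw [sum_comm]
    _ = ((1 / m : ℚ) : WithTop ℚ) * ∑ _j : Fin m, ∑ σ, (lam i σ : WithTop ℚ) * value σ := by
        simp_rw [P, sum_pi_coe_prod_mul_apply (hlam0 i) (hlam1 i)]
    _ = ∑ σ, (lam i σ : WithTop ℚ) * value σ := WithTop.one_div_mul_sum_const hm _

theorem averaging_by_fractional_polymorphism_does_not_increase_value
    {D : Type*} [Fintype D] [DecidableEq D]
    {I : Type*} [Fintype I] (X : I → Type*) [∀ i, Fintype (X i)] [∀ i, DecidableEq (X i)]
    (r : I → ℕ) (Φ : ∀ i, (Fin (r i) → D) → WithTop ℚ)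
    (xsc : ∀ i, Fin (r i) → X i)
    (lam : ∀ i, (X i → D) → ℚ)
    (hlam0 : ∀ i σ, 0 ≤ lam i σ) (hlam1 : ∀ i, ∑ σ : X i → D, lam i σ = 1)
    (hfeas : ∀ i (σ : X i → D), lam i σ ≠ 0 → Φ i (fun j => σ (xsc i j)) ≠ ⊤)
    {m : ℕ} (hm : 0 < m) (ω : ((Fin m → D) → D) → ℚ)
    (hω0 : ∀ f, 0 ≤ ω f) (hω1 : ∑ f, ω f = 1)
    (himp : ∀ i (ys : Fin m → (Fin (r i) → D)), (∀ j, Φ i (ys j) ≠ ⊤) →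
      ∑ f, (ω f : WithTop ℚ) * Φ i (fun l => f (fun j => ys j l)) ≤
        ((1 / m : ℚ) : WithTop ℚ) * ∑ j, Φ i (ys j))
    (lamω : ∀ i, (X i → D) → ℚ)
    (hlamω : ∀ i (σ : X i → D), lamω i σ =
      ∑ f, ∑ σs : Fin m → (X i → D),
        if (fun x => f (fun j => σs j x)) = σ then ω f * ∏ j, lam i (σs j) else 0) :
    ∀ i, ∑ σ : X i → D, (lamω i σ : WithTop ℚ) * Φ i (fun j => σ (xsc i j)) ≤
      ∑ σ : X i → D, (lam i σ : WithTop ℚ) * Φ i (fun j => σ (xsc i j)) :=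
  averaging_by_fractional_polymorphism_does_not_increase_value_general X r Φ xsc lam hlam0 hlam1
    hfeas hm ω hω0 himp lamω hlamω
end

section
/- For the torus instance I_n over a finite abelian group G, with S ⊆ V_x a set of vertex variables that excludes a cross and has no hole, the number of assignments on the induced variable set X̄ = Var(T_{n×n}[S]) satisfying all constraints of I_n whose scope lies in X̄ equals |G|^{C+H+V}, where C is the number of vertices in S, H the number of horizontal edge components, and V the number of vertical edge components of X̄. -/
/-!
Fix the vertex values `x`. Along the horizontal edges the constraints say that consecutive edge
values differ by a prescribed amount, so a solution is a "potential" for these increments on each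
horizontal component. Since `S` misses a whole column `b₀`, every row can be cut open at `b₀`;
prefix sums from `b₀` then give one potential on the whole torus, and every other solution differs
from it by a function that is constant on each horizontal component. Hence there are
`|G| ^ H` horizontal solutions for each `x`, and likewise `|G| ^ V` vertical ones, using the
missing row `a₀`.
-/

open Finset

lemma ZMod.val_add_one_of_add_one_ne_zero {n : ℕ} [NeZero n] {z : ZMod n} (h : z + 1 ≠ 0) :
    (z + 1).val = z.val + 1 := by
  obtain ⟨m, rfl⟩ : ∃ m, n = m + 1 := Nat.exists_eq_succ_of_ne_zero (NeZero.ne n)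
  obtain ⟨i, rfl⟩ : ∃ i : Fin (m + 1), (i : ZMod (m + 1)) = z := ⟨z, rfl⟩
  change ((i + 1 : Fin (m + 1)) : ℕ) = i + 1
  rw [Fin.val_add_one, if_neg]
  rintro rfl
  exact h (Fin.last_add_one m)

lemma ZMod.exists_add_one_eq_add {G : Type*} [AddCommGroup G] {n : ℕ} [NeZero n]
    (b₀ : ZMod n) (F : ZMod n → G) :
    ∃ P : ZMod n → G, ∀ b, b + 1 ≠ b₀ → P (b + 1) = P b + F b := by
  refine ⟨fun b => ∑ k ∈ range (b - b₀).val, F (b₀ + k), fun b hb => ?_⟩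
  have hval : (b + 1 - b₀).val = (b - b₀).val + 1 := by
    rw [add_sub_right_comm]
    exact ZMod.val_add_one_of_add_one_ne_zero (by rwa [← add_sub_right_comm, sub_ne_zero])
  simp only [hval, sum_range_succ, ZMod.natCast_zmod_val, add_sub_cancel]

namespace SimpleGraph

variable {V β : Type*} {G : SimpleGraph V}

lemma Reachable.apply_eq_of_forall_adj {f : V → β} (hf : ∀ v w, G.Adj v w → f v = f w)
    {u v : V} (h : G.Reachable u v) : f u = f v := by
  obtain ⟨p⟩ := h
  induction p with
  | nil => rfl
  | cons hadj _ ih => exact (hf _ _ hadj).trans ih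

def ConnectedComponent.liftEquiv (G : SimpleGraph V) :
    {f : V → β // ∀ v w, G.Adj v w → f v = f w} ≃ (G.ConnectedComponent → β) where
  toFun f := Quot.lift f.1 fun _ _ h => h.apply_eq_of_forall_adj f.2
  invFun φ := ⟨φ ∘ G.connectedComponentMk,
    fun _ _ h => congrArg φ (connectedComponentMk_eq_of_adj h)⟩
  left_inv _ := rfl
  right_inv _ := funext <| ConnectedComponent.ind fun _ => rfl

end SimpleGraph

def Equiv.subtypeProdAndEquivSigma {α β γ : Type*}
    (p : α → β → Prop) (q : α → γ → Prop) :
    {a : α × β × γ // p a.1 a.2.1 ∧ q a.1 a.2.2} ≃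
      Σ x : α, {y // p x y} × {z // q x z} where
  toFun a := ⟨a.1.1, ⟨a.1.2.1, a.2.1⟩, ⟨a.1.2.2, a.2.2⟩⟩
  invFun s := ⟨(s.1, s.2.1, s.2.2), s.2.1.2, s.2.2.2⟩
  left_inv _ := rfl
  right_inv _ := rfl

section Steps

variable {ι G : Type*} [AddCommGroup G] {σ : ι → ι} {S E : Set ι} {GE : SimpleGraph E}

lemma forall_step_eq_iff_forall_adj {β : Type*}
    (hGE : ∀ e e' : E, GE.Adj e e' ↔ e ≠ e' ∧ ((e' : ι) = σ e ∨ (e : ι) = σ e'))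
    (f : E → β) :
    (∀ p (h : p ∈ E) (h' : σ p ∈ E), f ⟨σ p, h'⟩ = f ⟨p, h⟩) ↔
      ∀ e e', GE.Adj e e' → f e = f e' := by
  constructor
  · rintro hf ⟨p, hp⟩ ⟨q, hq⟩ hadj
    rcases ((hGE _ _).1 hadj).2 with rfl | rfl
    · exact (hf p hp hq).symm
    · exact hf q hq hp
  · intro hf p h h'
    by_cases heq : (⟨σ p, h'⟩ : E) = ⟨p, h⟩
    · rw [heq]
    · exact (hf _ _ ((hGE _ _).2 ⟨Ne.symm heq, Or.inl rfl⟩)).symm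

lemma forall_step_eq_add_iff_sub (hES : E ⊆ S) (x : S → G) (c P : ι → G)
    (hP : ∀ p (hp : p ∈ S), p ∈ E → σ p ∈ E → P (σ p) = P p + x ⟨p, hp⟩ + c p)
    (y : E → G) :
    (∀ p (h1 : p ∈ S) (h2 : p ∈ E) (h3 : σ p ∈ E),
        y ⟨σ p, h3⟩ = y ⟨p, h2⟩ + x ⟨p, h1⟩ + c p) ↔
      ∀ p (h2 : p ∈ E) (h3 : σ p ∈ E),
        (y - fun e : E => P e) ⟨σ p, h3⟩ = (y - fun e : E => P e) ⟨p, h2⟩ := by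
  simp only [Pi.sub_apply]
  constructor
  · intro hy p h2 h3
    rw [hy p (hES h2) h2 h3, hP p (hES h2) h2 h3]
    abel
  · intro hy p h1 h2 h3
    rw [sub_eq_iff_eq_add.1 (hy p h2 h3), hP p h1 h2 h3]
    abel

def stepSolutionsEquivComponents
    (hGE : ∀ e e' : E, GE.Adj e e' ↔ e ≠ e' ∧ ((e' : ι) = σ e ∨ (e : ι) = σ e'))
    (hES : E ⊆ S) (x : S → G) (c P : ι → G)
    (hP : ∀ p (hp : p ∈ S), p ∈ E → σ p ∈ E → P (σ p) = P p + x ⟨p, hp⟩ + c p) :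
    {y : E → G // ∀ p (h1 : p ∈ S) (h2 : p ∈ E) (h3 : σ p ∈ E),
        y ⟨σ p, h3⟩ = y ⟨p, h2⟩ + x ⟨p, h1⟩ + c p} ≃ (GE.ConnectedComponent → G) :=
  (Equiv.subtypeEquiv (Equiv.subRight fun e : E => P e) fun y =>
    (forall_step_eq_add_iff_sub hES x c P hP y).trans (forall_step_eq_iff_forall_adj hGE _)).trans
    (SimpleGraph.ConnectedComponent.liftEquiv GE)

end Steps

section Torus

variable {G : Type*} [AddCommGroup G] {n : ℕ} [NeZero n] {S : Set (ZMod n × ZMod n)}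

lemma exists_row_potential {b₀ : ZMod n} (hb₀ : ∀ a, (a, b₀) ∉ S) (x : S → G)
    (c : ZMod n → ZMod n → G) :
    ∃ P : ZMod n × ZMod n → G, ∀ p (hp : p ∈ S), (p.1, p.2 + 1) ∈ S →
      P (p.1, p.2 + 1) = P p + x ⟨p, hp⟩ + c p.1 p.2 := by
  classical
  choose P hP using fun a => ZMod.exists_add_one_eq_add b₀ fun b =>
    (if h : (a, b) ∈ S then x ⟨(a, b), h⟩ else 0) + c a b
  refine ⟨fun p => P p.1 p.2, fun p hp hp' => ?_⟩
  dsimp only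
  rw [hP p.1 p.2 fun h => hb₀ p.1 (h ▸ hp'), dif_pos hp, add_assoc]

lemma exists_col_potential {a₀ : ZMod n} (ha₀ : ∀ b, (a₀, b) ∉ S) (x : S → G)
    (d : ZMod n → ZMod n → G) :
    ∃ P : ZMod n × ZMod n → G, ∀ p (hp : p ∈ S), (p.1 + 1, p.2) ∈ S →
      P (p.1 + 1, p.2) = P p + x ⟨p, hp⟩ + d p.1 p.2 := by
  classical
  choose P hP using fun b => ZMod.exists_add_one_eq_add a₀ fun a =>
    (if h : (a, b) ∈ S then x ⟨(a, b), h⟩ else 0) + d a b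
  refine ⟨fun p => P p.2 p.1, fun p hp hp' => ?_⟩
  dsimp only
  rw [hP p.2 p.1 fun h => ha₀ p.2 (h ▸ hp'), dif_pos hp, add_assoc]

end Torus

theorem torus_assignment_count_general
    {G : Type*} [AddCommGroup G] [Fintype G]
    (n : ℕ) [NeZero n]
    (c d : ZMod n → ZMod n → G)
    -- the set `S` of vertex variables, and the sets of horizontal/vertical edge
    -- variables of the induced subgraph `T_{n×n}[S]`
    (S HE VE : Set (ZMod n × ZMod n))
    (hHE : ∀ p : ZMod n × ZMod n, p ∈ HE ↔ p ∈ S ∧ (p.1, p.2 + 1) ∈ S)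
    (hVE : ∀ p : ZMod n × ZMod n, p ∈ VE ↔ p ∈ S ∧ (p.1 + 1, p.2) ∈ S)
    -- `S` excludes a cross
    (hcross : ∃ a' b' : ZMod n, (∀ b, (a', b) ∉ S) ∧ (∀ a, (a, b') ∉ S))
    -- graphs whose connected components are the horizontal/vertical components
    (GH : SimpleGraph ↥HE)
    (hGH : ∀ e e' : ↥HE, GH.Adj e e' ↔ e ≠ e' ∧
      ((e' : ZMod n × ZMod n) = ((e : ZMod n × ZMod n).1, (e : ZMod n × ZMod n).2 + 1) ∨
       (e : ZMod n × ZMod n) = ((e' : ZMod n × ZMod n).1, (e' : ZMod n × ZMod n).2 + 1)))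
    (GV : SimpleGraph ↥VE)
    (hGV : ∀ e e' : ↥VE, GV.Adj e e' ↔ e ≠ e' ∧
      ((e' : ZMod n × ZMod n) = ((e : ZMod n × ZMod n).1 + 1, (e : ZMod n × ZMod n).2) ∨
       (e : ZMod n × ZMod n) = ((e' : ZMod n × ZMod n).1 + 1, (e' : ZMod n × ZMod n).2))) :
    Nat.card {a : (↥S → G) × (↥HE → G) × (↥VE → G) //
      (∀ p : ZMod n × ZMod n, ∀ (h1 : p ∈ S) (h2 : p ∈ HE)
          (h3 : (p.1, p.2 + 1) ∈ HE),
        a.2.1 ⟨(p.1, p.2 + 1), h3⟩ = a.2.1 ⟨p, h2⟩ + a.1 ⟨p, h1⟩ + c p.1 p.2) ∧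
      (∀ p : ZMod n × ZMod n, ∀ (h1 : p ∈ S) (h2 : p ∈ VE)
          (h3 : (p.1 + 1, p.2) ∈ VE),
        a.2.2 ⟨(p.1 + 1, p.2), h3⟩ = a.2.2 ⟨p, h2⟩ + a.1 ⟨p, h1⟩ + d p.1 p.2)} =
    Fintype.card G ^
      (Nat.card ↥S + Nat.card GH.ConnectedComponent + Nat.card GV.ConnectedComponent) := by
  obtain ⟨a₀, b₀, ha₀, hb₀⟩ := hcross
  have hHS : HE ⊆ S := fun p hp => ((hHE p).1 hp).1
  have hVS : VE ⊆ S := fun p hp => ((hVE p).1 hp).1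
  choose PH hPH using fun x : S → G => exists_row_potential hb₀ x c
  choose PV hPV using fun x : S → G => exists_col_potential ha₀ x d
  let eH (x : S → G) := stepSolutionsEquivComponents hGH hHS x (fun p => c p.1 p.2) (PH x)
    fun p hp _ hp' => hPH x p hp (hHS hp')
  let eV (x : S → G) := stepSolutionsEquivComponents hGV hVS x (fun p => d p.1 p.2) (PV x)
    fun p hp _ hp' => hPV x p hp (hVS hp')
  rw [Nat.card_congr ((Equiv.subtypeProdAndEquivSigma _ _).trans
    ((Equiv.sigmaCongrRight fun x => (eH x).prodCongr (eV x)).trans (Equiv.sigmaEquivProd _ _)))]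
  simp only [Nat.card_prod, Nat.card_fun, Nat.card_eq_fintype_card, pow_add, mul_assoc]

theorem torus_assignment_count
    {G : Type*} [AddCommGroup G] [Fintype G] (g : G) (hg : g ≠ 0)
    (n : ℕ) [NeZero n]
    (c d : ZMod n → ZMod n → G)
    (hc : ∀ a b, c a b = 0 ∨ c a b = g) (hd : ∀ a b, d a b = 0 ∨ d a b = g)
    (hsum : (∑ a : ZMod n, ∑ b : ZMod n, c a b) -
        (∑ a : ZMod n, ∑ b : ZMod n, d a b) = g)
    -- the set `S` of vertex variables, and the sets of horizontal/vertical edge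
    -- variables of the induced subgraph `T_{n×n}[S]`
    (S HE VE : Set (ZMod n × ZMod n))
    (hHE : ∀ p : ZMod n × ZMod n, p ∈ HE ↔ p ∈ S ∧ (p.1, p.2 + 1) ∈ S)
    (hVE : ∀ p : ZMod n × ZMod n, p ∈ VE ↔ p ∈ S ∧ (p.1 + 1, p.2) ∈ S)
    -- `S` excludes a cross
    (hcross : ∃ a' b' : ZMod n, (∀ b, (a', b) ∉ S) ∧ (∀ a, (a, b') ∉ S))
    -- the torus grid graph
    (torus : SimpleGraph (ZMod n × ZMod n))
    (htorus : ∀ p q : ZMod n × ZMod n, torus.Adj p q ↔ p ≠ q ∧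
      ((p.1 = q.1 ∧ (p.2 = q.2 + 1 ∨ q.2 = p.2 + 1)) ∨
       (p.2 = q.2 ∧ (p.1 = q.1 + 1 ∨ q.1 = p.1 + 1))))
    -- `S` contains no hole: the induced subgraph on the complement is connected
    (hnohole : (SimpleGraph.induce Sᶜ torus).Connected)
    -- graphs whose connected components are the horizontal/vertical components
    (GH : SimpleGraph ↥HE)
    (hGH : ∀ e e' : ↥HE, GH.Adj e e' ↔ e ≠ e' ∧
      ((e' : ZMod n × ZMod n) = ((e : ZMod n × ZMod n).1, (e : ZMod n × ZMod n).2 + 1) ∨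
       (e : ZMod n × ZMod n) = ((e' : ZMod n × ZMod n).1, (e' : ZMod n × ZMod n).2 + 1)))
    (GV : SimpleGraph ↥VE)
    (hGV : ∀ e e' : ↥VE, GV.Adj e e' ↔ e ≠ e' ∧
      ((e' : ZMod n × ZMod n) = ((e : ZMod n × ZMod n).1 + 1, (e : ZMod n × ZMod n).2) ∨
       (e : ZMod n × ZMod n) = ((e' : ZMod n × ZMod n).1 + 1, (e' : ZMod n × ZMod n).2))) :
    Nat.card {a : (↥S → G) × (↥HE → G) × (↥VE → G) //
      (∀ p : ZMod n × ZMod n, ∀ (h1 : p ∈ S) (h2 : p ∈ HE)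
          (h3 : (p.1, p.2 + 1) ∈ HE),
        a.2.1 ⟨(p.1, p.2 + 1), h3⟩ = a.2.1 ⟨p, h2⟩ + a.1 ⟨p, h1⟩ + c p.1 p.2) ∧
      (∀ p : ZMod n × ZMod n, ∀ (h1 : p ∈ S) (h2 : p ∈ VE)
          (h3 : (p.1 + 1, p.2) ∈ VE),
        a.2.2 ⟨(p.1 + 1, p.2), h3⟩ = a.2.2 ⟨p, h2⟩ + a.1 ⟨p, h1⟩ + d p.1 p.2)} =
    Fintype.card G ^
      (Nat.card ↥S + Nat.card GH.ConnectedComponent + Nat.card GV.ConnectedComponent) :=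
  torus_assignment_count_general n c d S HE VE hHE hVE hcross GH hGH GV hGV
end
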